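/- arXiv:0908.2590 — 5 statements merged into one kernel-verified Lean document; each statement's English description precedes it below -/
import Mathlib

section
/- Let (S, d) be a metric space, let V be a countable subset of S that is dense in itself, let δ > 0 and p ∈ (0,1). Then with probability 1 with respect to the LARG(V, δ, p) product measure μ, the random graph is geometrically existentially closed at level δ; that is, μ({ω : G_ω is δ-g.e.c.}) = 1. -/
open MeasureTheory Metric

/-- Pairs of distinct points of `V` at distance less than `δ`: potential edges. -/
def LargEdges {S : Type*} [MetricSpace S] (V : Set S) (δ : ℝ) : Set (Sym2 V) :=
  {e | ¬ e.IsDiag ∧ ∀ u v : V, e = s(u, v) → dist (u : S) (v : S) < δ}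

/-- The graph on `V` determined by a sample `ω` of the LARG model. -/
def largGraph {S : Type*} [MetricSpace S] (V : Set S) (δ : ℝ)
    (ω : LargEdges V δ → Bool) : SimpleGraph V where
  Adj u v := ∃ h : s(u, v) ∈ LargEdges V δ, ω ⟨s(u, v), h⟩ = true
  symm := by
    constructor
    intro u v h
    rwa [Sym2.eq_swap]
  loopless := by
    constructor
    rintro u ⟨h, -⟩
    exact h.1 (by simp)

/-- `G` is geometrically existentially closed at level `δ`. -/
def IsGEC {S : Type*} [MetricSpace S] {V : Set S} (G : SimpleGraph V) (δ : ℝ) : Prop :=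
  ∀ δ' : ℝ, 0 < δ' → δ' < δ → ∀ x : V, ∀ A B : Finset V,
    Disjoint A B → x ∉ A → x ∉ B →
    (∀ u : V, u ∈ A ∨ u ∈ B → dist (u : S) (x : S) < δ) →
    ∃ z : V, z ∉ A ∧ z ∉ B ∧ z ≠ x ∧
      (∀ a ∈ A, G.Adj z a) ∧ (∀ b ∈ B, ¬ G.Adj z b) ∧
      (∀ u : V, u ∈ A ∨ u ∈ B → dist (u : S) (z : S) < δ) ∧ dist (x : S) (z : S) < δ'

/-- `G` has threshold `δ`: adjacent vertices are at distance less than `δ`. -/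
def HasThreshold {S : Type*} [MetricSpace S] {V : Set S} (G : SimpleGraph V) (δ : ℝ) : Prop :=
  ∀ u v : V, G.Adj u v → dist (u : S) (v : S) < δ

/-- A geometric `δ`-graph: `δ`-g.e.c. with threshold `δ`. -/
def IsGeometricGraph {S : Type*} [MetricSpace S] {V : Set S} (G : SimpleGraph V) (δ : ℝ) : Prop :=
  IsGEC G δ ∧ HasThreshold G δ

/-- A set is dense in itself. -/
def DenseInItself {S : Type*} [MetricSpace S] (V : Set S) : Prop :=
  ∀ x ∈ V, ∀ ε : ℝ, 0 < ε → ∃ y ∈ V, y ≠ x ∧ dist y x < ε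

/-- A graph is existentially closed. -/
def IsEC {α : Type*} (G : SimpleGraph α) : Prop :=
  ∀ A B : Finset α, Disjoint A B →
    ∃ z : α, z ∉ A ∧ z ∉ B ∧ (∀ a ∈ A, G.Adj z a) ∧ (∀ b ∈ B, ¬ G.Adj z b)

/-- A metrically convex set. -/
def MetricConvex {S : Type*} [MetricSpace S] (C : Set S) : Prop :=
  ∀ x ∈ C, ∀ y ∈ C, ∃ z ∈ C, dist x z + dist z y = dist x y

/-- `f : V → W` is a step-isometry at level `(δ, γ)`. -/
def IsStepIsometry {S T : Type*} [MetricSpace S] [MetricSpace T]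
    {V : Set S} {W : Set T} (f : V → W) (δ γ : ℝ) : Prop :=
  Function.Surjective f ∧
    ∀ u v : V, ⌊dist (u : S) (v : S) / δ⌋ = ⌊dist ((f u : T)) ((f v : T)) / γ⌋

/-- Quotient of `v` w.r.t. offset `δ` and anchor `v₀`. -/
noncomputable def quot' (δ v₀ v : ℝ) : ℤ := ⌊(v - v₀) / δ⌋

/-- Representative of `v` w.r.t. offset `δ` and anchor `v₀`. -/
noncomputable def repr' (δ v₀ v : ℝ) : ℝ := v - v₀ - δ * ⌊(v - v₀) / δ⌋

/-!
Fix a rational `δ' > 0`, a vertex `x` and disjoint finite sets `A`, `B` in the `δ`-ball around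
`x`. Since `V` is dense in itself, infinitely many vertices `z ∉ A ∪ B ∪ {x}` are close enough to
`x` to be within `δ'` of `x` and within `δ` of every point of `A ∪ B`. Along an injective sequence
`zₙ` of such vertices, the events "`zₙ` is joined to all of `A` and to none of `B`" are determined
by pairwise disjoint sets of edges, so they are independent, each of probability at least
`min(p, 1 - p) ^ #(A ∪ B)`; by the second Borel–Cantelli lemma one of them occurs almost surely.
As `V` is countable, only countably many such requirements arise.
-/

open Filter Function ProbabilityTheory Topology Finset

section Bernoulli

variable {ι : Type*} {μ : Measure (ι → Bool)} {p : ℝ}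

def IsBernoulliPi (μ : Measure (ι → Bool)) (p : ℝ) : Prop :=
  ∀ (F : Finset ι) (b : ι → Bool), μ {ω | ∀ e ∈ F, ω e = b e} =
    ∏ e ∈ F, (if b e = true then ENNReal.ofReal p else ENNReal.ofReal (1 - p))

theorem measurableSet_setOf_forall_eq (F : Finset ι) (b : ι → Bool) :
    MeasurableSet {ω : ι → Bool | ∀ e ∈ F, ω e = b e} :=
  MeasurableSet.pi F.countable_toSet fun e _ => measurableSet_singleton (b e)

namespace IsBernoulliPi

theorem iIndepSet {κ : Type*} (hμ : IsBernoulliPi μ p) {F : κ → Finset ι}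
    (hF : Pairwise (Disjoint on F)) (b : ι → Bool) :
    iIndepSet (fun n => {ω | ∀ e ∈ F n, ω e = b e}) μ := by
  classical
  rw [iIndepSet_iff_meas_biInter fun n => measurableSet_setOf_forall_eq _ _]
  intro t
  have hinter : ⋂ n ∈ t, {ω : ι → Bool | ∀ e ∈ F n, ω e = b e} =
      {ω | ∀ e ∈ t.biUnion F, ω e = b e} := by
    ext ω
    simp only [Set.mem_iInter, Set.mem_ofPred_eq, mem_biUnion]
    exact ⟨fun h e ⟨n, hn, he⟩ => h n hn e he, fun h n hn e he => h e ⟨n, hn, he⟩⟩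
  rw [hinter, hμ, prod_biUnion (hF.set_pairwise _)]
  exact prod_congr rfl fun n _ => (hμ _ _).symm

theorem pow_card_le_measure (hμ : IsBernoulliPi μ p) (F : Finset ι) (b : ι → Bool) :
    ENNReal.ofReal (min p (1 - p)) ^ #F ≤ μ {ω | ∀ e ∈ F, ω e = b e} := by
  rw [hμ, ← prod_const]
  refine prod_le_prod' fun e _ => ?_
  split
  · exact ENNReal.ofReal_le_ofReal (min_le_left _ _)
  · exact ENNReal.ofReal_le_ofReal (min_le_right _ _)

theorem ae_exists_forall_eq (hμ : IsBernoulliPi μ p) (hp : p ∈ Set.Ioo 0 1)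
    {F : ℕ → Finset ι} (hF : Pairwise (Disjoint on F)) {k : ℕ} (hk : ∀ n, #(F n) ≤ k)
    (b : ι → Bool) : ∀ᵐ ω ∂μ, ∃ n, ∀ e ∈ F n, ω e = b e := by
  set E : ℕ → Set (ι → Bool) := fun n => {ω | ∀ e ∈ F n, ω e = b e}
  have hE : ∀ n, MeasurableSet (E n) := fun n => measurableSet_setOf_forall_eq _ _
  have hindep := hμ.iIndepSet hF b
  have := hindep.isProbabilityMeasure
  have hc0 : ENNReal.ofReal (min p (1 - p)) ≠ 0 := by
    simpa using lt_min hp.1 (sub_pos.2 hp.2)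
  have hc1 : ENNReal.ofReal (min p (1 - p)) ≤ 1 :=
    ENNReal.ofReal_le_one.2 (by linarith [min_le_left p (1 - p), min_le_right p (1 - p)])
  have hsum : ∑' n, μ (E n) = ⊤ :=
    eq_top_mono (ENNReal.tsum_le_tsum fun n =>
        (pow_le_pow_right_of_le_one' hc1 (hk n)).trans (hμ.pow_card_le_measure _ _))
      (ENNReal.tsum_const_eq_top_of_ne_zero (pow_ne_zero _ hc0))
  have hlimsup : ∀ᵐ ω ∂μ, ω ∈ limsup E atTop :=
    (ae_iff_measure_eq (MeasurableSet.measurableSet_limsup hE).nullMeasurableSet).2 <|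
      (measure_limsup_eq_one hE hindep hsum).trans measure_univ.symm
  filter_upwards [hlimsup] with ω hω
  exact Set.mem_iUnion.1 (limsup_le_iSup (u := E) (f := atTop) hω)

end IsBernoulliPi

end Bernoulli

section Geometry

variable {S : Type*} [MetricSpace S] {V : Set S}

theorem DenseInItself.nhdsNE_neBot (hV : DenseInItself V) (x : V) : (𝓝[≠] x).NeBot := by
  refine mem_closure_iff_nhdsWithin_neBot.1 (Metric.mem_closure_iff.2 fun ε hε => ?_)
  obtain ⟨y, hyV, hyx, hy⟩ := hV x x.2 ε hε
  exact ⟨⟨y, hyV⟩, fun h => hyx (congrArg Subtype.val h), by rwa [dist_comm]⟩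

theorem DenseInItself.infinite_setOf_near (hV : DenseInItself V) {x : V} {U : Finset V}
    {δ δ' : ℝ} (hδ' : 0 < δ') (hU : ∀ u ∈ U, dist (u : S) x < δ) :
    {z : V | z ∉ U ∧ z ≠ x ∧ (∀ u ∈ U, dist (u : S) z < δ) ∧ dist (x : S) z < δ'}.Infinite := by
  have := hV.nhdsNE_neBot x
  have hball (y : V) {r : ℝ} (hy : dist y x < r) : ∀ᶠ z in 𝓝 x, dist y z < r :=
    Filter.mem_of_superset (Metric.isOpen_ball.mem_nhds (Metric.mem_ball'.2 hy))
      fun _ => Metric.mem_ball'.1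
  have hnear : ∀ᶠ z in 𝓝 x, (∀ u ∈ U, dist u z < δ) ∧ dist x z < δ' :=
    ((eventually_all_finset U).2 fun u hu => hball u (hU u hu)).and
      (hball x (by rwa [dist_self]))
  refine ((infinite_of_mem_nhds x hnear).sdiff ((U : Set V) ∪ {x}).toFinite).mono ?_
  rintro z ⟨hz, hzU⟩
  simp only [Set.mem_union, mem_coe, Set.mem_singleton_iff, not_or] at hzU
  exact ⟨hzU.1, hzU.2, hz⟩

end Geometry

section LargGraph

variable {S : Type*} [MetricSpace S] {V : Set S} {δ : ℝ}

theorem mk_mem_largEdges_iff {u v : V} :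
    s(u, v) ∈ LargEdges V δ ↔ u ≠ v ∧ dist (u : S) v < δ := by
  refine ⟨fun h => ⟨Sym2.mk_isDiag_iff.not.1 h.1, h.2 u v rfl⟩, fun ⟨hne, hd⟩ => ⟨?_, ?_⟩⟩
  · exact Sym2.mk_isDiag_iff.not.2 hne
  · intro u' v' h
    rcases Sym2.eq_iff.1 h with ⟨rfl, rfl⟩ | ⟨rfl, rfl⟩
    · exact hd
    · rwa [dist_comm]

open Classical in
noncomputable def starEdges (z : V) (U : Finset V) : Finset (LargEdges V δ) :=
  (U.image fun u => s(z, u)).subtype (· ∈ LargEdges V δ)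

theorem mem_starEdges {z : V} {U : Finset V} {e : LargEdges V δ} :
    e ∈ starEdges z U ↔ ∃ u ∈ U, s(z, u) = e := by
  classical
  simp [starEdges]

theorem card_starEdges_le (z : V) (U : Finset V) : #(starEdges (δ := δ) z U) ≤ #U := by
  classical
  exact (card_subtype _ _).trans_le ((card_filter_le _ _).trans card_image_le)

theorem disjoint_starEdges {z z' : V} {U : Finset V} (hzz' : z ≠ z') (hz : z ∉ U) :
    Disjoint (starEdges (δ := δ) z U) (starEdges z' U) := by
  refine disjoint_left.2 fun e he he' => ?_
  obtain ⟨u, -, he⟩ := mem_starEdges.1 he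
  obtain ⟨u', hu', he'⟩ := mem_starEdges.1 he'
  rcases Sym2.eq_iff.1 (he'.trans he.symm) with ⟨h, -⟩ | ⟨-, h⟩
  · exact hzz' h.symm
  · exact hz (h ▸ hu')

open Classical in
noncomputable def adjPattern (A : Finset V) (e : LargEdges V δ) : Bool :=
  decide (∃ a ∈ A, a ∈ (e : Sym2 V))

theorem adjPattern_mk {A : Finset V} {z u : V} (hz : z ∉ A) (h : s(z, u) ∈ LargEdges V δ) :
    adjPattern A ⟨s(z, u), h⟩ = true ↔ u ∈ A := by
  simp only [adjPattern, decide_eq_true_iff, Sym2.mem_iff]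
  refine ⟨?_, fun hu => ⟨u, hu, .inr rfl⟩⟩
  rintro ⟨a, ha, rfl | rfl⟩
  exacts [(hz ha).elim, ha]

theorem adj_largGraph_of_eq_adjPattern [DecidableEq V] {ω : LargEdges V δ → Bool} {z : V}
    {A B : Finset V} (hAB : Disjoint A B) (hedge : ∀ u ∈ A ∪ B, s(z, u) ∈ LargEdges V δ)
    (hω : ∀ e ∈ starEdges z (A ∪ B), ω e = adjPattern A e) :
    (∀ a ∈ A, (largGraph V δ ω).Adj z a) ∧ (∀ b ∈ B, ¬ (largGraph V δ ω).Adj z b) := by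
  have hzA : z ∉ A := fun hz => (mk_mem_largEdges_iff.1 (hedge z (mem_union_left _ hz))).1 rfl
  have hval (u : V) (hu : u ∈ A ∪ B) : ω ⟨s(z, u), hedge u hu⟩ = true ↔ u ∈ A := by
    rw [hω _ (mem_starEdges.2 ⟨u, hu, rfl⟩), adjPattern_mk hzA]
  refine ⟨fun a ha => ⟨hedge a (mem_union_left _ ha), ?_⟩, fun b hb ⟨h, hωb⟩ => ?_⟩
  · exact (hval a (mem_union_left _ ha)).2 ha
  · exact disjoint_right.1 hAB hb ((hval b (mem_union_right _ hb)).1 hωb)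

end LargGraph

section Main

variable {S : Type*} [MetricSpace S] {V : Set S}

/-- The conclusion of `IsGEC G δ` for the data `δ'`, `x`, `A`, `B`, witnessed by `z`. -/
def IsGECWitness (G : SimpleGraph V) (δ δ' : ℝ) (x : V) (A B : Finset V) (z : V) : Prop :=
  z ∉ A ∧ z ∉ B ∧ z ≠ x ∧ (∀ a ∈ A, G.Adj z a) ∧ (∀ b ∈ B, ¬ G.Adj z b) ∧
    (∀ u : V, u ∈ A ∨ u ∈ B → dist (u : S) (z : S) < δ) ∧ dist (x : S) (z : S) < δ'

theorem IsGECWitness.mono {G : SimpleGraph V} {δ δ₁ δ₂ : ℝ} {x z : V} {A B : Finset V}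
    (h : IsGECWitness G δ δ₁ x A B z) (hδ : δ₁ ≤ δ₂) : IsGECWitness G δ δ₂ x A B z :=
  ⟨h.1, h.2.1, h.2.2.1, h.2.2.2.1, h.2.2.2.2.1, h.2.2.2.2.2.1, h.2.2.2.2.2.2.trans_le hδ⟩

theorem ae_exists_isGECWitness_largGraph (hV : DenseInItself V) {δ p : ℝ}
    (hp : p ∈ Set.Ioo 0 1) {μ : Measure (LargEdges V δ → Bool)} (hμ : IsBernoulliPi μ p)
    {δ' : ℝ} (hδ' : 0 < δ') {x : V} {A B : Finset V} (hAB : Disjoint A B)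
    (hdist : ∀ u : V, u ∈ A ∨ u ∈ B → dist (u : S) x < δ) :
    ∀ᵐ ω ∂μ, ∃ z, IsGECWitness (largGraph V δ ω) δ δ' x A B z := by
  classical
  have hC := hV.infinite_setOf_near (U := A ∪ B) hδ' fun u hu => hdist u (mem_union.1 hu)
  obtain ⟨z, hz_inj, hz⟩ : ∃ z : ℕ → V, Injective z ∧ ∀ n, z n ∈ _ :=
    ⟨_, Subtype.val_injective.comp (hC.natEmbedding _).injective, fun n => (hC.natEmbedding _ n).2⟩
  have hedge (n : ℕ) (u : V) (hu : u ∈ A ∪ B) : s(z n, u) ∈ LargEdges V δ :=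
    mk_mem_largEdges_iff.2
      ⟨fun h => (hz n).1 (h ▸ hu), by rw [dist_comm]; exact (hz n).2.2.1 u hu⟩
  filter_upwards [hμ.ae_exists_forall_eq hp (F := fun n => starEdges (z n) (A ∪ B))
    (fun m n hmn => disjoint_starEdges (hz_inj.ne hmn) (hz m).1)
    (fun n => card_starEdges_le _ _) (adjPattern A)] with ω ⟨n, hn⟩
  obtain ⟨hzAB, hzx, hzdist, hzx'⟩ := hz n
  obtain ⟨hzA, hzB⟩ := not_or.1 (mt mem_union.2 hzAB)
  obtain ⟨hadj, hnadj⟩ := adj_largGraph_of_eq_adjPattern hAB (hedge n) hn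
  exact ⟨z n, hzA, hzB, hzx, hadj, hnadj, fun u hu => hzdist u (mem_union.2 hu), hzx'⟩

end Main

theorem larg_is_gec_general {S : Type*} [MetricSpace S] (V : Set S) (hVc : V.Countable)
    (hVd : DenseInItself V) (δ : ℝ) (p : ℝ) (hp : p ∈ Set.Ioo (0 : ℝ) 1)
    (μ : MeasureTheory.Measure (↥(LargEdges V δ) → Bool)) [MeasureTheory.IsProbabilityMeasure μ]
    (hμ : ∀ (F : Finset ↥(LargEdges V δ)) (b : ↥(LargEdges V δ) → Bool),
      μ {ω | ∀ e ∈ F, ω e = b e} =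
        ∏ e ∈ F, (if b e = true then ENNReal.ofReal p else ENNReal.ofReal (1 - p))) :
    μ {ω | IsGEC (largGraph V δ ω) δ} = 1 := by
  have := hVc.to_subtype
  have hwit : ∀ᵐ ω ∂μ, ∀ q : ℚ, 0 < (q : ℝ) → ∀ x : V, ∀ A B : Finset V, Disjoint A B →
      (∀ u : V, u ∈ A ∨ u ∈ B → dist (u : S) x < δ) →
      ∃ z, IsGECWitness (largGraph V δ ω) δ q x A B z := by
    simp only [ae_all_iff, eventually_imp_distrib_left]
    exact fun q hq x A B hAB hdist => ae_exists_isGECWitness_largGraph hVd hp hμ hq hAB hdist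
  refine (measure_congr (ae_eq_univ.2 ?_)).trans measure_univ
  filter_upwards [hwit] with ω hω δ' hδ' _ x A B hAB _ _ hdist
  obtain ⟨q, hq, hqδ'⟩ := exists_rat_btwn hδ'
  obtain ⟨z, hz⟩ := hω q hq x A B hAB hdist
  exact ⟨z, hz.mono hqδ'.le⟩

theorem larg_is_gec {S : Type*} [MetricSpace S] (V : Set S) (hVc : V.Countable)
    (hVd : DenseInItself V) (δ : ℝ) (hδ : 0 < δ) (p : ℝ) (hp : p ∈ Set.Ioo (0 : ℝ) 1)
    (μ : MeasureTheory.Measure (↥(LargEdges V δ) → Bool)) [MeasureTheory.IsProbabilityMeasure μ]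
    (hμ : ∀ (F : Finset ↥(LargEdges V δ)) (b : ↥(LargEdges V δ) → Bool),
      μ {ω | ∀ e ∈ F, ω e = b e} =
        ∏ e ∈ F, (if b e = true then ENNReal.ofReal p else ENNReal.ofReal (1 - p))) :
    μ {ω | IsGEC (largGraph V δ ω) δ} = 1 :=
  larg_is_gec_general V hVc hVd δ p hp μ hμ
end

section
/- Let n ≥ 1 and consider ℝ^n with the L∞ metric. Let V, W ⊆ ℝ^n, let δ, γ > 0, let v₀ ∈ V, w₀ ∈ W, and let f : V → W be surjective with f(v₀) = w₀. For each coordinate i (1 ≤ i ≤ n), write the i-th coordinate of a point u ∈ V as u_i = (v₀)_i + q(u_i)·δ + r(u_i) with q(u_i) = ⌊(u_i − (v₀)_i)/δ⌋ and r(u_i) ∈ [0, δ), and the i-th coordinate of a point w ∈ W as w_i = (w₀)_i + q'(w_i)·γ + r'(w_i) with q'(w_i) = ⌊(w_i − (w₀)_i)/γ⌋ and r'(w_i) ∈ [0, γ). If for all u, v ∈ V and all coordinates i: (1) r(u_i) ≤ r(v_i) if and only if r'(f(u)_i) ≤ r'(f(v)_i), and (2) q(u_i) = q'(f(u)_i),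 then f is a step-isometry at level (δ, γ) with respect to the L∞ metrics. -/
open MeasureTheory Metric

/-!
Coordinatewise, `a - b = δ (q a - q b) + (r a - r b)` with `r a - r b ∈ (-δ, δ)`, so
`⌊(a - b) / δ⌋` is `q a - q b` or one less, according to whether `r b ≤ r a`. Hence the two
hypotheses give equal integer parts of the scaled coordinate distances, and these determine the
integer part of the scaled sup distance, since `⌊· / δ⌋₊` is monotone and so commutes with `sup`.
-/

open scoped NNReal

section FloorDistPi

variable {ι : Type*} [Fintype ι] {X : ι → Type*} [∀ i, PseudoMetricSpace (X i)]

theorem natFloor_dist_pi_div (x y : ∀ i, X i) {δ : ℝ} (hδ : 0 ≤ δ) :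
    ⌊dist x y / δ⌋₊ = Finset.univ.sup fun i => ⌊dist (x i) (y i) / δ⌋₊ := by
  lift δ to ℝ≥0 using hδ
  have hmono : Monotone fun t : ℝ≥0 => ⌊(t : ℝ) / δ⌋₊ := fun s t hst =>
    Nat.floor_le_floor (by gcongr)
  simpa [dist_pi_def, Function.comp_def] using
    Finset.apply_sup_eq_sup_comp_of_linearOrder (s := Finset.univ)
      (f := fun i => nndist (x i) (y i)) _ hmono (by simp)

theorem floor_dist_pi_div_eq {x y : ∀ i, X i} {Y : ι → Type*} [∀ i, PseudoMetricSpace (Y i)]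
    {x' y' : ∀ i, Y i} {δ γ : ℝ} (hδ : 0 ≤ δ) (hγ : 0 ≤ γ)
    (h : ∀ i, ⌊dist (x i) (y i) / δ⌋ = ⌊dist (x' i) (y' i) / γ⌋) :
    ⌊dist x y / δ⌋ = ⌊dist x' y' / γ⌋ := by
  have hnat : ∀ i, ⌊dist (x i) (y i) / δ⌋₊ = ⌊dist (x' i) (y' i) / γ⌋₊ := fun i => by
    simpa only [← Int.floor_toNat] using congrArg Int.toNat (h i)
  rw [← Int.natCast_floor_eq_floor (by positivity), ← Int.natCast_floor_eq_floor (by positivity),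
    natFloor_dist_pi_div x y hδ, natFloor_dist_pi_div x' y' hγ]
  simp only [hnat]

end FloorDistPi

section QuotRepr

variable {δ γ v₀ w₀ : ℝ}

theorem quot'_mul_add_repr' (δ v₀ v : ℝ) : δ * quot' δ v₀ v + repr' δ v₀ v = v - v₀ := by
  unfold quot' repr'; ring

theorem repr'_nonneg (hδ : 0 < δ) (v : ℝ) : 0 ≤ repr' δ v₀ v := by
  have := Int.sub_floor_div_mul_nonneg (v - v₀) hδ
  unfold repr'; linarith

theorem repr'_lt (hδ : 0 < δ) (v : ℝ) : repr' δ v₀ v < δ := by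
  have := Int.sub_floor_div_mul_lt (v - v₀) hδ
  unfold repr'; linarith

theorem floor_sub_div_eq (hδ : 0 < δ) (a b : ℝ) :
    ⌊(a - b) / δ⌋ = quot' δ v₀ a - quot' δ v₀ b -
      if repr' δ v₀ b ≤ repr' δ v₀ a then 0 else 1 := by
  have ha := quot'_mul_add_repr' δ v₀ a
  have hb := quot'_mul_add_repr' δ v₀ b
  have := repr'_nonneg (v₀ := v₀) hδ a
  have := repr'_lt (v₀ := v₀) hδ a
  have := repr'_nonneg (v₀ := v₀) hδ b
  have := repr'_lt (v₀ := v₀) hδ b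
  rw [Int.floor_eq_iff, le_div_iff₀ hδ, div_lt_iff₀ hδ]
  split_ifs <;> push_cast <;> constructor <;> linarith

theorem floor_abs_div (x : ℝ) {δ : ℝ} (hδ : 0 ≤ δ) : ⌊|x| / δ⌋ = max ⌊x / δ⌋ ⌊-x / δ⌋ := by
  rw [abs_eq_max_neg, ← max_div_div_right hδ]
  exact Int.floor_mono.map_max

theorem floor_dist_div_eq_of_quot'_repr' (hδ : 0 < δ) (hγ : 0 < γ) {a b a' b' : ℝ}
    (ha : quot' δ v₀ a = quot' γ w₀ a') (hb : quot' δ v₀ b = quot' γ w₀ b')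
    (hab : repr' δ v₀ a ≤ repr' δ v₀ b ↔ repr' γ w₀ a' ≤ repr' γ w₀ b')
    (hba : repr' δ v₀ b ≤ repr' δ v₀ a ↔ repr' γ w₀ b' ≤ repr' γ w₀ a') :
    ⌊dist a b / δ⌋ = ⌊dist a' b' / γ⌋ := by
  rw [Real.dist_eq, Real.dist_eq, floor_abs_div _ hδ.le, floor_abs_div _ hγ.le, neg_sub, neg_sub,
    floor_sub_div_eq (v₀ := v₀) hδ, floor_sub_div_eq (v₀ := v₀) hδ,
    floor_sub_div_eq (v₀ := w₀) hγ, floor_sub_div_eq (v₀ := w₀) hγ, ha, hb]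
  simp only [hab, hba]

end QuotRepr

theorem step_isometry_conditions_Rn_general (n : ℕ) (V W : Set (Fin n → ℝ))
    (δ γ : ℝ) (hδ : 0 < δ) (hγ : 0 < γ)
    (f : V → W)
    (v₀ : V) (w₀ : W)
    (h1 : ∀ u v : V, ∀ i : Fin n,
      repr' δ ((v₀ : Fin n → ℝ) i) ((u : Fin n → ℝ) i) ≤ repr' δ ((v₀ : Fin n → ℝ) i) ((v : Fin n → ℝ) i) ↔
        repr' γ ((w₀ : Fin n → ℝ) i) ((f u : Fin n → ℝ) i) ≤ repr' γ ((w₀ : Fin n → ℝ) i) ((f v : Fin n → ℝ) i))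
    (h2 : ∀ u : V, ∀ i : Fin n,
      quot' δ ((v₀ : Fin n → ℝ) i) ((u : Fin n → ℝ) i) = quot' γ ((w₀ : Fin n → ℝ) i) ((f u : Fin n → ℝ) i)) :
    ∀ u v : V, ⌊dist (u : Fin n → ℝ) (v : Fin n → ℝ) / δ⌋ =
      ⌊dist ((f u : Fin n → ℝ)) ((f v : Fin n → ℝ)) / γ⌋ := fun u v =>
  floor_dist_pi_div_eq hδ.le hγ.le fun i =>
    floor_dist_div_eq_of_quot'_repr' hδ hγ (h2 u i) (h2 v i) (h1 u v i) (h1 v u i)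

theorem step_isometry_conditions_Rn (n : ℕ) (hn : 1 ≤ n) (V W : Set (Fin n → ℝ))
    (δ γ : ℝ) (hδ : 0 < δ) (hγ : 0 < γ)
    (f : V → W) (hf : Function.Surjective f)
    (v₀ : V) (w₀ : W) (hw₀ : f v₀ = w₀)
    (h1 : ∀ u v : V, ∀ i : Fin n,
      repr' δ ((v₀ : Fin n → ℝ) i) ((u : Fin n → ℝ) i) ≤ repr' δ ((v₀ : Fin n → ℝ) i) ((v : Fin n → ℝ) i) ↔
        repr' γ ((w₀ : Fin n → ℝ) i) ((f u : Fin n → ℝ) i) ≤ repr' γ ((w₀ : Fin n → ℝ) i) ((f v : Fin n → ℝ) i))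
    (h2 : ∀ u : V, ∀ i : Fin n,
      quot' δ ((v₀ : Fin n → ℝ) i) ((u : Fin n → ℝ) i) = quot' γ ((w₀ : Fin n → ℝ) i) ((f u : Fin n → ℝ) i)) :
    ∀ u v : V, ⌊dist (u : Fin n → ℝ) (v : Fin n → ℝ) / δ⌋ =
      ⌊dist ((f u : Fin n → ℝ)) ((f v : Fin n → ℝ)) / γ⌋ :=
  step_isometry_conditions_Rn_general n V W δ γ hδ hγ f v₀ w₀ h1 h2
end

section
/- Let V and W be dense subsets of the Euclidean plane and let δ > 0. Then every step-isometry at level (δ, δ) from V to W is an isometry; that is, if f : V → W is surjective and ⌊d(u,v)/δ⌋ = ⌊d(f(u), f(v))/δ⌋ for all u, v ∈ V, then d(f(u), f(v)) = d(u,v) for all u, v ∈ V. -/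
open MeasureTheory Metric

/-!
A step-isometry at level `(δ, δ)` preserves every relation `dist u v < m * δ`, `m : ℕ`. For a dense
subset `X` of the plane these relations detect the thresholds `√(4 b² - k²) δ`: two points of `X`
are at least that far apart exactly when any two points of `X` in the lens cut out by the balls
of radius `b δ` around them are less than `k δ` apart. Hence `f` preserves these thresholds. The
gaps between consecutive thresholds `√(4 b² - k²) δ - √(4 b² - (k + 1)²) δ` are dense in
`(0, ∞)`: if `f` shrank `dist u v`, a point of `V` just beyond `u` on the ray from `v` could be
chosen inside one threshold from `u` and outside the next one from `v`, and its image would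
violate the triangle inequality; stretching is excluded in the same way in `W`, using
surjectivity.
-/

open Module RealInnerProductSpace

def LensSmall {S : Type*} [PseudoMetricSpace S] (X : Set S) (R D : ℝ) (x y : S) : Prop :=
  ∀ z z' : X, dist (z : S) x < R → dist (z : S) y < R → dist (z' : S) x < R →
    dist (z' : S) y < R → dist (z : S) z' < D

theorem lt_natCast_mul_iff_of_floor_div_eq {a b δ γ : ℝ} (hδ : 0 < δ) (hγ : 0 < γ)
    (h : ⌊a / δ⌋ = ⌊b / γ⌋) (m : ℕ) : a < m * δ ↔ b < m * γ := by
  have key : ∀ c : ℝ, c < m ↔ ⌊c⌋ < m := fun c => by exact_mod_cast Int.floor_lt.symm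
  rw [← div_lt_iff₀ hδ, ← div_lt_iff₀ hγ, key, key, h]

namespace IsStepIsometry

variable {S T : Type*} [MetricSpace S] [MetricSpace T] {V : Set S} {W : Set T} {f : V → W}
  {δ γ : ℝ}

theorem dist_lt_iff (hf : IsStepIsometry f δ γ) (hδ : 0 < δ) (hγ : 0 < γ) (u v : V) (m : ℕ) :
    dist (u : S) v < m * δ ↔ dist (f u : T) (f v) < m * γ :=
  lt_natCast_mul_iff_of_floor_div_eq hδ hγ (hf.2 u v) m

theorem lensSmall_iff (hf : IsStepIsometry f δ γ) (hδ : 0 < δ) (hγ : 0 < γ) (b k : ℕ)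
    (u v : V) : LensSmall V (b * δ) (k * δ) u v ↔ LensSmall W (b * γ) (k * γ) (f u) (f v) := by
  constructor
  · intro h w w'
    obtain ⟨z, rfl⟩ := hf.1 w
    obtain ⟨z', rfl⟩ := hf.1 w'
    simpa only [hf.dist_lt_iff hδ hγ] using h z z'
  · intro h z z'
    simpa only [hf.dist_lt_iff hδ hγ] using h (f z) (f z')

end IsStepIsometry

section Lens

/-- The distance of the centres at which the lens of two balls of radius `R` has diameter `D`. -/
noncomputable def lensThreshold (R D : ℝ) : ℝ := √(4 * R ^ 2 - D ^ 2)

variable {E : Type*} [NormedAddCommGroup E] [InnerProductSpace ℝ E] {X : Set E} {R D : ℝ} {x y : E}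

theorem exists_norm_eq_one_inner_eq_zero (hE : 2 ≤ finrank ℝ E) (v : E) :
    ∃ n : E, ‖n‖ = 1 ∧ ⟪v, n⟫ = 0 := by
  have : FiniteDimensional ℝ E := Module.finite_of_finrank_pos (by omega)
  have hK : 1 ≤ finrank ℝ (ℝ ∙ v)ᗮ := by
    have := (ℝ ∙ v).finrank_add_finrank_orthogonal
    have : finrank ℝ (ℝ ∙ v) ≤ 1 := (finrank_span_le_card ({v} : Set E)).trans (by simp)
    omega
  obtain ⟨w, hw, hw0⟩ := Submodule.exists_mem_ne_zero_of_ne_bot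
    (Submodule.one_le_finrank_iff.mp hK)
  refine ⟨‖w‖⁻¹ • w, norm_smul_inv_norm hw0, ?_⟩
  rw [inner_smul_right, Submodule.inner_right_of_mem_orthogonal
    (Submodule.mem_span_singleton_self v) hw, mul_zero]

theorem dist_midpoint_add_smul_sq {n : E} (hn : ‖n‖ = 1) (hxy : ⟪y - x, n⟫ = 0) (c : ℝ) :
    dist (midpoint ℝ x y + c • n) x ^ 2 = dist x y ^ 2 / 4 + c ^ 2 := by
  have hperp : ⟪(2⁻¹ : ℝ) • (y - x), c • n⟫ = 0 := by
    rw [real_inner_smul_left, real_inner_smul_right, hxy, mul_zero, mul_zero]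
  rw [dist_eq_norm, add_sub_right_comm, midpoint_sub_left, invOf_eq_inv, sq, sq,
    norm_add_sq_eq_norm_sq_add_norm_sq_real hperp, norm_smul, norm_smul, hn, dist_eq_norm',
    Real.norm_eq_abs, Real.norm_eq_abs, abs_of_pos (by norm_num : (0 : ℝ) < 2⁻¹), mul_one,
    abs_mul_abs_self]
  ring

theorem lensSmall_of_le_dist_sq (hD : 0 ≤ D) (h : 4 * R ^ 2 - D ^ 2 ≤ dist x y ^ 2) :
    LensSmall X R D x y := by
  have hmid : ∀ z : E, dist z x < R → dist z y < R → dist z (midpoint ℝ x y) < D / 2 := by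
    intro z hzx hzy
    have := EuclideanGeometry.dist_sq_add_dist_sq_eq_two_mul_dist_midpoint_sq_add_half_dist_sq
      z x y
    refine lt_of_pow_lt_pow_left₀ 2 (by positivity) ?_
    nlinarith [dist_nonneg (x := z) (y := x), dist_nonneg (x := z) (y := y)]
  intro z z' hzx hzy hz'x hz'y
  calc dist (z : E) z' ≤ dist (z : E) (midpoint ℝ x y) + dist (z' : E) (midpoint ℝ x y) :=
        dist_triangle_right _ _ _
    _ < D / 2 + D / 2 := add_lt_add (hmid _ hzx hzy) (hmid _ hz'x hz'y)
    _ = D := add_halves D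

theorem not_lensSmall_of_dist_sq_lt (hE : 2 ≤ finrank ℝ E) (hX : Dense X) (hR : 0 ≤ R)
    (hD : 0 ≤ D) (h : dist x y ^ 2 < 4 * R ^ 2 - D ^ 2) : ¬ LensSmall X R D x y := by
  intro hL
  obtain ⟨n, hn, hxy⟩ := exists_norm_eq_one_inner_eq_zero hE (y - x)
  have hyx : ⟪x - y, n⟫ = 0 := by rw [← neg_sub, inner_neg_left, hxy, neg_zero]
  obtain ⟨c, hDc, hcR⟩ : ∃ c, D / 2 < c ∧ c < √(R ^ 2 - dist x y ^ 2 / 4) :=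
    exists_between ((Real.lt_sqrt (by positivity)).mpr (by linarith))
  have hc : dist x y ^ 2 / 4 + c ^ 2 < R ^ 2 := by
    have := (Real.lt_sqrt (by linarith)).mp hcR
    linarith
  -- the two points `midpoint ℝ x y ± c • n` of the lens are `2 * c > D` apart
  have hlens : ∀ c' : ℝ, c' ^ 2 = c ^ 2 → ∃ z : X, dist (z : E) x < R ∧ dist (z : E) y < R ∧
      dist (z : E) (midpoint ℝ x y + c' • n) < c - D / 2 := by
    intro c' hc'
    have hx := dist_midpoint_add_smul_sq hn hxy c'
    have hy := dist_midpoint_add_smul_sq hn hyx c'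
    rw [midpoint_comm, dist_comm y x] at hy
    have hmem : midpoint ℝ x y + c' • n ∈
        ball x R ∩ (ball y R ∩ ball (midpoint ℝ x y + c' • n) (c - D / 2)) :=
      ⟨lt_of_pow_lt_pow_left₀ 2 hR (by rw [hx, hc']; exact hc),
        lt_of_pow_lt_pow_left₀ 2 hR (by rw [hy, hc']; exact hc), mem_ball_self (by linarith)⟩
    obtain ⟨z, hzX, hzx, hzy, hz⟩ :=
      hX.exists_mem_open (isOpen_ball.inter (isOpen_ball.inter isOpen_ball)) ⟨_, hmem⟩
    exact ⟨⟨z, hzX⟩, hzx, hzy, hz⟩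
  obtain ⟨z, hzx, hzy, hz⟩ := hlens c rfl
  obtain ⟨z', hz'x, hz'y, hz'⟩ := hlens (-c) (neg_sq c)
  have hPQ : dist (midpoint ℝ x y + c • n) (midpoint ℝ x y + (-c) • n) = 2 * c := by
    rw [dist_add_left, dist_eq_norm, neg_smul, sub_neg_eq_add, ← two_smul ℝ, smul_smul, norm_smul,
      hn, mul_one, Real.norm_of_nonneg (by linarith)]
  have := hL z z' hzx hzy hz'x hz'y
  linarith [dist_triangle4 (midpoint ℝ x y + c • n) z z' (midpoint ℝ x y + (-c) • n),
    dist_comm (midpoint ℝ x y + c • n) z]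

theorem lensSmall_iff_lensThreshold_le (hE : 2 ≤ finrank ℝ E) (hX : Dense X) (hR : 0 ≤ R)
    (hD : 0 ≤ D) : LensSmall X R D x y ↔ lensThreshold R D ≤ dist x y := by
  rw [lensThreshold, Real.sqrt_le_left dist_nonneg]
  exact ⟨fun hL => not_lt.mp fun h => not_lensSmall_of_dist_sq_lt hE hX hR hD h hL,
    lensSmall_of_le_dist_sq hD⟩

end Lens

theorem sqrt_one_sub_sq_sub_mem_Icc {p q : ℝ} (hp : 0 ≤ p) (hpq : p ≤ q) (hq : q < 1) :
    √(1 - p ^ 2) - √(1 - q ^ 2) ∈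
      Set.Icc ((q - p) * (p / √(1 - p ^ 2))) ((q - p) * (q / √(1 - q ^ 2))) := by
  have hc : 0 < √(1 - q ^ 2) := Real.sqrt_pos.mpr (by nlinarith)
  have hca : √(1 - q ^ 2) ≤ √(1 - p ^ 2) := Real.sqrt_le_sqrt (by nlinarith)
  have ha2 := Real.sq_sqrt (show 0 ≤ 1 - p ^ 2 by nlinarith)
  have hc2 := Real.sq_sqrt (show 0 ≤ 1 - q ^ 2 by nlinarith)
  constructor
  · rw [mul_div_assoc', div_le_iff₀ (hc.trans_le hca)]
    nlinarith [mul_le_mul hpq hca hc.le (hp.trans hpq), mul_nonneg (sub_nonneg.mpr hpq) hc.le]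
  · rw [mul_div_assoc', le_div_iff₀ hc]
    nlinarith [mul_le_mul hpq hca hc.le (hp.trans hpq), mul_nonneg (sub_nonneg.mpr hpq) hc.le]

theorem continuousAt_div_sqrt_one_sub_sq {s : ℝ} (hs : s ^ 2 < 1) :
    ContinuousAt (fun s : ℝ => s / √(1 - s ^ 2)) s :=
  continuousAt_id.div (by fun_prop) (Real.sqrt_pos.mpr (by linarith)).ne'

theorem div_sqrt_one_sub_sq_eq (c : ℝ) :
    c / √(1 + c ^ 2) / √(1 - (c / √(1 + c ^ 2)) ^ 2) = c := by
  have h1 : 0 < √(1 + c ^ 2) := Real.sqrt_pos.mpr (by positivity)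
  have h2 := Real.sq_sqrt (show 0 ≤ 1 + c ^ 2 by positivity)
  rw [div_pow, h2, one_sub_div (by positivity), add_sub_cancel_right, Real.sqrt_div zero_le_one,
    Real.sqrt_one, div_div_eq_mul_div, div_one, div_mul_cancel₀ _ h1.ne']

theorem lensThreshold_eq {δ : ℝ} (hδ : 0 ≤ δ) {b : ℕ} (hb : b ≠ 0) (k : ℝ) :
    lensThreshold (b * δ) (k * δ) = 2 * b * δ * √(1 - (k / (2 * b)) ^ 2) := by
  have hb' : (0 : ℝ) < b := by positivity
  rw [lensThreshold, show 4 * (b * δ) ^ 2 - (k * δ) ^ 2 = (2 * b * δ) ^ 2 * (1 - (k / (2 * b)) ^ 2)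
    by field_simp; ring, Real.sqrt_mul (by positivity), Real.sqrt_sq (by positivity)]

theorem exists_nat_div_two_mul_near {s η : ℝ} (hs : 0 ≤ s) (hη : 0 < η) :
    ∃ b k : ℕ, b ≠ 0 ∧ |k / (2 * b) - s| < η ∧ |(k + 1) / (2 * b) - s| < η := by
  obtain ⟨b, hb⟩ := exists_nat_gt (1 / η)
  have hb0 : (0 : ℝ) < b := (one_div_pos.mpr hη).trans hb
  have hh : 1 / (2 * b) < η := by
    rw [div_lt_iff₀ hη] at hb
    rw [div_lt_iff₀ (by positivity)]
    linarith
  have hk : (⌊2 * b * s⌋₊ : ℝ) ≤ 2 * b * s := Nat.floor_le (by positivity)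
  have hk1 : 2 * b * s < ⌊2 * b * s⌋₊ + 1 := Nat.lt_floor_add_one _
  have hp : (⌊2 * b * s⌋₊ : ℝ) / (2 * b) ≤ s := by rw [div_le_iff₀ (by positivity)]; linarith
  have hq : s < (⌊2 * b * s⌋₊ + 1) / (2 * b) := by rw [lt_div_iff₀ (by positivity)]; linarith
  refine ⟨b, ⌊2 * b * s⌋₊, by exact_mod_cast hb0.ne', ?_, ?_⟩ <;> rw [abs_sub_lt_iff] <;>
    constructor <;> linarith [add_div (⌊2 * b * s⌋₊ : ℝ) 1 (2 * b)]

theorem exists_lensThreshold_sub_lensThreshold_succ_near {δ t ε : ℝ} (hδ : 0 < δ) (ht : 0 < t)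
    (hε : 0 < ε) : ∃ b k : ℕ, 0 < lensThreshold (b * δ) ((k + 1 : ℕ) * δ) ∧
      |lensThreshold (b * δ) (k * δ) - lensThreshold (b * δ) ((k + 1 : ℕ) * δ) - t| < ε := by
  -- By concavity of `√(1 - s ^ 2)` the gap lies between `G (k / (2 * b))` and
  -- `G ((k + 1) / (2 * b))`; choose `s₀` with `G s₀ = t` and a fine grid around it.
  set G : ℝ → ℝ := fun s => δ * (s / √(1 - s ^ 2))
  set s₀ := t / δ / √(1 + (t / δ) ^ 2)
  have hs₀ : 0 ≤ s₀ := by positivity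
  have hs₀1 : s₀ < 1 := by
    rw [div_lt_one (by positivity)]
    exact (Real.lt_sqrt (by positivity)).mpr (by linarith)
  have hGs₀ : G s₀ = t := by
    simp only [G, s₀]
    rw [div_sqrt_one_sub_sq_eq, mul_div_cancel₀ _ hδ.ne']
  have hGcont : ContinuousAt G s₀ := continuousAt_const.mul
    (continuousAt_div_sqrt_one_sub_sq (pow_lt_one₀ hs₀ hs₀1 two_ne_zero))
  obtain ⟨η, hη, hG⟩ := Metric.continuousAt_iff.mp hGcont ε hε
  obtain ⟨b, k, hb, hp, hq⟩ := exists_nat_div_two_mul_near hs₀ (lt_min hη (sub_pos.mpr hs₀1))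
  set p := (k : ℝ) / (2 * b)
  set q := ((k : ℝ) + 1) / (2 * b)
  have hq1 : q < 1 := by linarith [(abs_sub_lt_iff.mp hq).1, min_le_right η (1 - s₀)]
  obtain ⟨hlow, hupp⟩ := sqrt_one_sub_sq_sub_mem_Icc (p := p) (by positivity)
    (by simp only [p, q]; gcongr; linarith) hq1
  have hGp := hG (hp.trans_le (min_le_left _ _))
  have hGq := hG (hq.trans_le (min_le_left _ _))
  refine ⟨b, k, ?_, ?_⟩
  · rw [Nat.cast_succ, lensThreshold_eq hδ.le hb]
    have : 0 < √(1 - q ^ 2) := Real.sqrt_pos.mpr (by nlinarith [show 0 ≤ q by positivity])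
    positivity
  · rw [Nat.cast_succ, lensThreshold_eq hδ.le hb, lensThreshold_eq hδ.le hb, ← mul_sub]
    change |2 * b * δ * (√(1 - p ^ 2) - √(1 - q ^ 2)) - t| < ε
    have hscale : 2 * b * δ * (q - p) = δ := by
      simp only [p, q]
      field_simp
      ring
    have h₁ := mul_le_mul_of_nonneg_left hlow (by positivity : (0 : ℝ) ≤ 2 * b * δ)
    have h₂ := mul_le_mul_of_nonneg_left hupp (by positivity : (0 : ℝ) ≤ 2 * b * δ)
    rw [← mul_assoc, hscale] at h₁ h₂
    rw [Real.dist_eq, hGs₀, abs_sub_lt_iff] at hGp hGq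
    rw [abs_sub_lt_iff]
    constructor <;> linarith

theorem exists_mem_dist_lt_lt_dist {E : Type*} [NormedAddCommGroup E] [NormedSpace ℝ E]
    {X : Set E} (hX : Dense X) {x y : E} (hxy : x ≠ y) {τ₁ τ₂ : ℝ} (hτ₁ : 0 < τ₁)
    (hτ : τ₂ - τ₁ < dist x y) : ∃ z ∈ X, dist z x < τ₁ ∧ τ₂ < dist z y := by
  have hd : 0 < dist x y := dist_pos.mpr hxy
  obtain ⟨s, hs, hsτ⟩ : ∃ s, max 0 (τ₂ - dist x y) < s ∧ s < τ₁ :=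
    exists_between (max_lt hτ₁ (by linarith))
  have hs0 : 0 < s := (le_max_left _ _).trans_lt hs
  set P := AffineMap.lineMap y x (1 + s / dist x y)
  have hPx : dist P x = s := by
    rw [dist_lineMap_right, sub_add_cancel_left, norm_neg, Real.norm_of_nonneg (by positivity),
      dist_comm y x, div_mul_cancel₀ _ hd.ne']
  have hPy : dist P y = dist x y + s := by
    rw [dist_lineMap_left, Real.norm_of_nonneg (by positivity), dist_comm y x, add_mul,
      div_mul_cancel₀ _ hd.ne', one_mul]
  have hP : P ∈ ball x τ₁ ∩ (closedBall y τ₂)ᶜ := ⟨mem_ball.mpr (hPx ▸ hsτ), fun h => by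
    linarith [mem_closedBall.mp h, le_max_right 0 (τ₂ - dist x y)]⟩
  obtain ⟨z, hzX, hzx, hzy⟩ :=
    hX.exists_mem_open (isOpen_ball.inter isClosed_closedBall.isOpen_compl) ⟨P, hP⟩
  exact ⟨z, hzX, mem_ball.mp hzx, not_le.mp fun h => hzy (mem_closedBall.mpr h)⟩

theorem dist_le_dist_of_forall_threshold_partner {E T : Type*} [NormedAddCommGroup E]
    [NormedSpace ℝ E] [PseudoMetricSpace T] {X : Set E} (hX : Dense X) {Θ : Set ℝ}
    (hΘ : ∀ t > 0, ∀ ε > 0, ∃ τ₁ ∈ Θ, ∃ τ₂ ∈ Θ, 0 < τ₁ ∧ |τ₂ - τ₁ - t| < ε) {x y : E} {a b : T}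
    (h : ∀ z ∈ X, ∃ w : T, ∀ τ ∈ Θ, (τ ≤ dist z x ↔ τ ≤ dist w a) ∧ (τ ≤ dist z y ↔ τ ≤ dist w b)) :
    dist x y ≤ dist a b := by
  by_contra! hlt
  have hxy : x ≠ y := dist_pos.mp (dist_nonneg.trans_lt hlt)
  obtain ⟨τ₁, hτ₁, τ₂, hτ₂, hτ₁0, hgap⟩ :=
    hΘ ((dist x y + dist a b) / 2) (by linarith [dist_nonneg (x := a) (y := b)])
      ((dist x y - dist a b) / 2) (by linarith)
  obtain ⟨hgap₁, hgap₂⟩ := abs_sub_lt_iff.mp hgap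
  obtain ⟨z, hzX, hzx, hzy⟩ := exists_mem_dist_lt_lt_dist hX hxy hτ₁0 (by linarith)
  obtain ⟨w, hw⟩ := h z hzX
  have hwa : dist w a < τ₁ := not_le.mp fun h' => ((hw τ₁ hτ₁).1.mpr h').not_gt hzx
  have hwb : τ₂ ≤ dist w b := (hw τ₂ hτ₂).2.mp hzy.le
  linarith [dist_triangle w a b]

namespace IsStepIsometry

variable {E F : Type*} [NormedAddCommGroup E] [InnerProductSpace ℝ E] [NormedAddCommGroup F]
  [InnerProductSpace ℝ F] {V : Set E} {W : Set F} {f : V → W} {δ : ℝ}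

theorem lensThreshold_le_dist_iff (hf : IsStepIsometry f δ δ) (hE : 2 ≤ finrank ℝ E)
    (hF : 2 ≤ finrank ℝ F) (hV : Dense V) (hW : Dense W) (hδ : 0 < δ) (b k : ℕ) (u v : V) :
    lensThreshold (b * δ) (k * δ) ≤ dist (u : E) v ↔
      lensThreshold (b * δ) (k * δ) ≤ dist (f u : F) (f v) := by
  rw [← lensSmall_iff_lensThreshold_le hE hV (by positivity) (by positivity),
    ← lensSmall_iff_lensThreshold_le hF hW (by positivity) (by positivity),
    hf.lensSmall_iff hδ hδ]

theorem dist_eq_of_dense (hf : IsStepIsometry f δ δ) (hE : 2 ≤ finrank ℝ E) (hF : 2 ≤ finrank ℝ F)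
    (hV : Dense V) (hW : Dense W) (hδ : 0 < δ) (u v : V) :
    dist (f u : F) (f v) = dist (u : E) v := by
  set Θ := Set.range fun bk : ℕ × ℕ => lensThreshold (bk.1 * δ) (bk.2 * δ)
  have hΘ : ∀ t > 0, ∀ ε > 0, ∃ τ₁ ∈ Θ, ∃ τ₂ ∈ Θ, 0 < τ₁ ∧ |τ₂ - τ₁ - t| < ε := by
    intro t ht ε hε
    obtain ⟨b, k, hpos, hgap⟩ := exists_lensThreshold_sub_lensThreshold_succ_near hδ ht hε
    exact ⟨_, ⟨(b, k + 1), rfl⟩, _, ⟨(b, k), rfl⟩, hpos, hgap⟩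
  have hfΘ : ∀ u v : V, ∀ τ ∈ Θ, τ ≤ dist (u : E) v ↔ τ ≤ dist (f u : F) (f v) := by
    rintro u v _ ⟨⟨b, k⟩, rfl⟩
    exact hf.lensThreshold_le_dist_iff hE hF hV hW hδ b k u v
  refine le_antisymm (dist_le_dist_of_forall_threshold_partner hW hΘ fun z hz => ?_)
    (dist_le_dist_of_forall_threshold_partner hV hΘ fun z hz =>
      ⟨f ⟨z, hz⟩, fun τ hτ => ⟨hfΘ ⟨z, hz⟩ u τ hτ, hfΘ ⟨z, hz⟩ v τ hτ⟩⟩)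
  obtain ⟨s, hs⟩ := hf.1 ⟨z, hz⟩
  refine ⟨s, fun τ hτ => ?_⟩
  rw [hfΘ s u τ hτ, hfΘ s v τ hτ, hs]
  exact ⟨Iff.rfl, Iff.rfl⟩

end IsStepIsometry

theorem step_isometry_euclidean_plane_is_isometry
    (V W : Set (EuclideanSpace ℝ (Fin 2))) (hV : Dense V) (hW : Dense W)
    (δ : ℝ) (hδ : 0 < δ) (f : V → W) (hf : Function.Surjective f)
    (hstep : ∀ u v : V, ⌊dist (u : EuclideanSpace ℝ (Fin 2)) (v : EuclideanSpace ℝ (Fin 2)) / δ⌋ =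
      ⌊dist ((f u : EuclideanSpace ℝ (Fin 2))) ((f v : EuclideanSpace ℝ (Fin 2))) / δ⌋) :
    ∀ u v : V, dist ((f u : EuclideanSpace ℝ (Fin 2))) ((f v : EuclideanSpace ℝ (Fin 2))) =
      dist (u : EuclideanSpace ℝ (Fin 2)) (v : EuclideanSpace ℝ (Fin 2)) :=
  IsStepIsometry.dist_eq_of_dense ⟨hf, hstep⟩ finrank_euclideanSpace_fin.ge finrank_euclideanSpace_fin.ge
    hV hW hδ
end

section
/- Let V and W be dense subsets of the Euclidean plane and let f : V → W be a bijective step-isometry at level (1, 1). Define the discrepancy of x, y ∈ V as D(x,y) = |d(x,y) − d(f(x), f(y))|. For every ε > 0, if there exist points x₁, x₂ ∈ V with D(x₁,x₂) = ε, then there exist points x₃, x₄ ∈ V with D(x₃,x₄) ≥ (3/4)·ε and d(x₃,x₄) > 40. -/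
open MeasureTheory Metric

/-! If `f` shrinks `x₁ x₂` by `ε`, extend the segment beyond `x₂` to a point `z` of the dense
set `V` with `dist x₂ z` just below an integer `n + 1`. As `f` preserves integer parts of
distances, `dist (f x₂) (f z) < n + 1`, so by the triangle inequality `f` still shrinks the long
segment `x₁ z` by almost `ε`. If `f` stretches `x₁ x₂`, argue with `f⁻¹` on the dense set `W`. -/

section

variable {E T : Type*} [NormedAddCommGroup E] [NormedSpace ℝ E] [MetricSpace T]

lemma exists_dist_eq_dist_add {p q : E} (hpq : p ≠ q) {r : ℝ} (hr : 0 ≤ r) :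
    ∃ t : E, dist q t = r ∧ dist p t = dist p q + r := by
  have hd : 0 < dist p q := dist_pos.mpr hpq
  refine ⟨AffineMap.lineMap p q (1 + r / dist p q), ?_, ?_⟩
  · rw [dist_right_lineMap, sub_add_cancel_left, norm_neg, Real.norm_of_nonneg (by positivity),
      div_mul_cancel₀ _ hd.ne']
  · rw [dist_left_lineMap, Real.norm_of_nonneg (by positivity), add_mul, one_mul,
      div_mul_cancel₀ _ hd.ne']

lemma Dense.exists_dist_sub_dist_gt_of_floor_dist_le {V : Set E} (hV : Dense V) {f : V → T}
    (hf : ∀ u v : V, ⌊dist (f u) (f v)⌋ ≤ ⌊dist u v⌋) {x₁ x₂ : V} (hx : x₁ ≠ x₂) (n : ℕ)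
    {η : ℝ} (hη : 0 < η) :
    ∃ z : V, (n : ℝ) < dist x₁ z ∧
      dist x₁ x₂ - dist (f x₁) (f x₂) - η < dist x₁ z - dist (f x₁) (f z) := by
  obtain ⟨δ, hδ, hδη, hδ1⟩ : ∃ δ : ℝ, 0 < δ ∧ δ ≤ η / 2 ∧ δ ≤ 1 / 2 :=
    ⟨min η 1 / 2, by positivity, by linarith [min_le_left η 1], by linarith [min_le_right η 1]⟩
  obtain ⟨t, hx₂t, hx₁t⟩ :=
    exists_dist_eq_dist_add (Subtype.coe_injective.ne hx) (r := n + 1 - δ) (by linarith)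
  obtain ⟨z, hzV, htz⟩ := hV.exists_dist_lt t (half_pos hδ)
  let z' : V := ⟨z, hzV⟩
  have hx₂z : dist x₂ z' < n + 1 := by
    have := dist_triangle (x₂ : E) t z
    rw [Subtype.dist_eq]
    linarith
  have hx₁z : dist x₁ x₂ + (n + 1) - 3 / 2 * δ < dist x₁ z' := by
    have := dist_triangle (x₁ : E) z t
    rw [dist_comm z t] at this
    rw [Subtype.dist_eq, Subtype.dist_eq]
    linarith
  have hfx₂z : dist (f x₂) (f z') < n + 1 := by
    have := (hf x₂ z').trans (Int.floor_le_iff.mpr (by exact_mod_cast hx₂z) : ⌊dist x₂ z'⌋ ≤ n)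
    exact_mod_cast Int.floor_le_iff.mp this
  refine ⟨z', by linarith [dist_nonneg (x := x₁) (y := x₂)], ?_⟩
  linarith [dist_triangle (f x₁) (f x₂) (f z')]

end

theorem discrepancy_spreads (V W : Set (EuclideanSpace ℝ (Fin 2)))
    (hV : Dense V) (hW : Dense W) (f : V → W) (hf : Function.Bijective f)
    (hstep : ∀ u v : V, ⌊dist (u : EuclideanSpace ℝ (Fin 2)) (v : EuclideanSpace ℝ (Fin 2)) / 1⌋ =
      ⌊dist ((f u : EuclideanSpace ℝ (Fin 2))) ((f v : EuclideanSpace ℝ (Fin 2))) / 1⌋)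
    (ε : ℝ) (hε : 0 < ε) (x₁ x₂ : V)
    (hD : |dist (x₁ : EuclideanSpace ℝ (Fin 2)) (x₂ : EuclideanSpace ℝ (Fin 2)) -
      dist ((f x₁ : EuclideanSpace ℝ (Fin 2))) ((f x₂ : EuclideanSpace ℝ (Fin 2)))| = ε) :
    ∃ x₃ x₄ : V, |dist (x₃ : EuclideanSpace ℝ (Fin 2)) (x₄ : EuclideanSpace ℝ (Fin 2)) -
      dist ((f x₃ : EuclideanSpace ℝ (Fin 2))) ((f x₄ : EuclideanSpace ℝ (Fin 2)))| ≥ (3 / 4) * ε ∧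
      dist (x₃ : EuclideanSpace ℝ (Fin 2)) (x₄ : EuclideanSpace ℝ (Fin 2)) > 40 := by
  simp only [div_one, ← Subtype.dist_eq] at hstep hD ⊢
  have hx : x₁ ≠ x₂ := by rintro rfl; simp only [dist_self, sub_self, abs_zero] at hD; linarith
  rcases (abs_eq hε.le).mp hD with hshrink | hstretch
  · obtain ⟨z, hfar, hgt⟩ := hV.exists_dist_sub_dist_gt_of_floor_dist_le
      (fun u v => (hstep u v).ge) hx 40 (η := ε / 4) (by positivity)
    exact ⟨x₁, z, by linarith [le_abs_self (dist x₁ z - dist (f x₁) (f z))], hfar⟩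
  · let e := Equiv.ofBijective f hf
    have hstep' : ∀ u v : W, ⌊dist u v⌋ = ⌊dist (e.symm u) (e.symm v)⌋ := fun u v => by
      simpa only [e, Equiv.ofBijective_apply_symm_apply] using (hstep (e.symm u) (e.symm v)).symm
    -- only the integer part of a distance transfers back to `V`, hence `41` rather than `40`
    obtain ⟨w, hfar, hgt⟩ := hW.exists_dist_sub_dist_gt_of_floor_dist_le
      (fun u v => (hstep' u v).ge) (hf.injective.ne hx) 41 (η := ε / 4) (by positivity)
    simp only [e, Equiv.ofBijective_symm_apply_apply] at hgt
    have hw : f (e.symm w) = w := e.apply_symm_apply w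
    refine ⟨x₁, e.symm w, ?_, ?_⟩
    · rw [hw]
      linarith [neg_abs_le (dist x₁ (e.symm w) - dist (f x₁) w)]
    · have h41 : ((41 : ℤ) : ℝ) ≤ dist x₁ (e.symm w) := Int.le_floor.mp <| by
        rw [hstep, hw, Int.le_floor]
        exact_mod_cast hfar.le
      push_cast at h41
      linarith
end

section
/- Let V be a countably infinite dense subset of the Euclidean plane and let δ > 0. Then V admits a good enumeration: there is a bijection i ↦ v_i from the positive integers onto V such that d(v_i, v_{i+1}) < δ for all i ≥ 1 and the three points v₁, v₂, v₃ are not collinear. -/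
open MeasureTheory Metric

/-!
A line in the plane has empty interior, so density of `V` gives a non-collinear start `a, b, c`
with steps shorter than `δ`. Density also lets one walk inside `V` from any point to any other
in steps shorter than `δ` while avoiding a prescribed finite set: move `δ / 2` along the
segment and replace the point reached by a fresh nearby point of `V`. Enumerating `V` as
`w₀, w₁, …` and greedily appending such a fresh walk to `wₙ` at stage `n` yields an increasing
sequence of injective paths whose union is the required enumeration.
-/

section ChainEnumeration

variable {α : Type*}

theorem exists_getElem_eq_of_isPrefix {L : ℕ → List α} (hL : ∀ n, L n <+: L (n + 1))
    (hlen : ∀ n, n < (L n).length) :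
    ∃ g : ℕ → α, ∀ n k (hk : k < (L n).length), (L n)[k] = g k := by
  have mono : ∀ {m n}, m ≤ n → L m <+: L n := fun h => Nat.rel_of_forall_rel_succ_of_le _ hL h
  refine ⟨fun k => (L k)[k]'(hlen k), fun n k hk => ?_⟩
  rcases le_total n k with h | h
  · exact (mono h).getElem hk
  · exact ((mono h).getElem (hlen k)).symm

variable {R : α → α → Prop}

theorem exists_isPrefix_isChain_mem
    (hR : ∀ (F : Finset α) (a t : α), t ∉ F →
      ∃ M : List α, (a :: M).IsChain R ∧ M.Nodup ∧ (∀ x ∈ M, x ∉ F) ∧ t ∈ M)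
    {l : List α} (hl : l.IsChain R) (hnd : l.Nodup) (hne : l ≠ []) (t : α) :
    ∃ l', l <+: l' ∧ l'.IsChain R ∧ l'.Nodup ∧ t ∈ l' := by
  classical
  by_cases ht : t ∈ l
  · exact ⟨l, List.prefix_refl l, hl, hnd, ht⟩
  obtain ⟨M, hMc, hMnd, hMF, htM⟩ := hR l.toFinset (l.getLast hne) t (by simpa using ht)
  refine ⟨l ++ M, List.prefix_append l M, ?_, ?_, List.mem_append_right l htM⟩
  · refine hl.append hMc.tail fun x hx y hy => ?_
    rw [List.getLast?_eq_some_getLast hne, Option.mem_some_iff] at hx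
    subst hx
    exact (List.isChain_cons.1 hMc).1 y hy
  · exact hnd.append hMnd fun x hxl hxM => hMF x hxM (List.mem_toFinset.2 hxl)

theorem exists_bijective_isChain_of_prefix [Countable α] [Infinite α]
    (hR : ∀ (F : Finset α) (a t : α), t ∉ F →
      ∃ M : List α, (a :: M).IsChain R ∧ M.Nodup ∧ (∀ x ∈ M, x ∉ F) ∧ t ∈ M)
    {l₀ : List α} (hl₀ : l₀.IsChain R) (hnd : l₀.Nodup) (hne : l₀ ≠ []) :
    ∃ g : ℕ → α, g.Bijective ∧ (∀ n, R (g n) (g (n + 1))) ∧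
      ∀ k (hk : k < l₀.length), g k = l₀[k] := by
  have : Denumerable α := (nonempty_denumerable α).some
  let w : ℕ ≃ α := (Denumerable.eqv α).symm
  let Path := {l : List α // l ≠ [] ∧ l.IsChain R ∧ l.Nodup}
  have step (l : Path) (t : α) : ∃ l' : Path, l.1 <+: l'.1 ∧ t ∈ l'.1 := by
    obtain ⟨l', hpre, hc, hnd', ht⟩ := exists_isPrefix_isChain_mem hR l.2.2.1 l.2.2.2 l.2.1 t
    exact ⟨⟨l', List.ne_nil_of_mem ht, hc, hnd'⟩, hpre, ht⟩
  choose next hpre hmem using step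
  let L : ℕ → Path := fun n => Nat.rec ⟨l₀, hne, hl₀, hnd⟩ (fun k l => next l (w k)) n
  have hmono : ∀ {m n}, m ≤ n → (L m).1 <+: (L n).1 :=
    fun h => Nat.rel_of_forall_rel_succ_of_le (fun l l' : Path => l.1 <+: l'.1) (fun n => hpre _ _) h
  have hw : ∀ k n, k ≤ n → w k ∈ (L (n + 1)).1 :=
    fun k n h => (hmono (Nat.succ_le_succ h)).subset (hmem (L k) (w k))
  have hlen (n : ℕ) : n < (L (n + 1)).1.length := by
    have hsub : (List.range (n + 1)).map w ⊆ (L (n + 1)).1 := by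
      intro x hx
      obtain ⟨k, hk, rfl⟩ := List.mem_map.1 hx
      exact hw k n (Nat.lt_succ_iff.1 (List.mem_range.1 hk))
    simpa using (List.subperm_of_subset ((List.nodup_range).map w.injective) hsub).length_le
  obtain ⟨g, hg⟩ := exists_getElem_eq_of_isPrefix (L := fun n => (L (n + 1)).1)
    (fun n => hpre _ _) hlen
  refine ⟨g, ⟨fun j k hjk => ?_, fun x => ?_⟩, fun n => ?_, fun k hk => ?_⟩
  · have hj : j < (L (j + k + 1)).1.length := by have := hlen (j + k); omega
    have hk : k < (L (j + k + 1)).1.length := by have := hlen (j + k); omega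
    rw [← hg _ j hj, ← hg _ k hk] at hjk
    exact ((L (j + k + 1)).2.2.2.getElem_inj_iff).1 hjk
  · obtain ⟨i, hi, hix⟩ := List.mem_iff_getElem.1 (hw (w.symm x) _ le_rfl)
    exact ⟨i, by rw [← hg _ i hi, hix, Equiv.apply_symm_apply]⟩
  · have h := hlen (n + 1)
    rw [← hg (n + 1) n (by omega), ← hg (n + 1) (n + 1) h]
    exact List.isChain_iff_getElem.1 (L (n + 2)).2.2.1 n h
  · rw [← hg 0 k (hk.trans_le (hpre (L 0) (w 0)).length_le)]
    exact ((hpre (L 0) (w 0)).getElem hk).symm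

end ChainEnumeration

section DenseChains

variable {E : Type*} [NormedAddCommGroup E] [NormedSpace ℝ E]

theorem exists_dist_eq_dist_sub (a t : E) {r : ℝ} (hr₀ : 0 ≤ r) (hr : r ≤ dist a t) :
    ∃ p, dist a p = r ∧ dist p t = dist a t - r := by
  have hc : r / dist a t * dist a t = r :=
    div_mul_cancel_of_imp fun h => le_antisymm (h ▸ hr) hr₀
  have hc₀ : 0 ≤ r / dist a t := div_nonneg hr₀ dist_nonneg
  have hc₁ : r / dist a t ≤ 1 := div_le_one_of_le₀ hr dist_nonneg
  refine ⟨AffineMap.lineMap a t (r / dist a t), ?_, ?_⟩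
  · rw [dist_comm, dist_lineMap_left, Real.norm_of_nonneg hc₀, hc]
  · rw [dist_lineMap_right, Real.norm_of_nonneg (sub_nonneg.2 hc₁), sub_mul, one_mul, hc]

theorem Dense.exists_isChain_dist_lt [Nontrivial E] {V : Set E} (hV : Dense V) {δ : ℝ}
    (hδ : 0 < δ) (F : Finset V) (a t : V) (ht : t ∉ F) :
    ∃ M : List V, (a :: M).IsChain (fun u v => dist u v < δ) ∧ M.Nodup ∧
      (∀ x ∈ M, x ∉ F) ∧ t ∈ M := by
  classical
  obtain ⟨n, hn⟩ := exists_nat_gt (dist a t / (δ / 4))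
  induction n generalizing F a with
  | zero => exact absurd hn (by simp only [Nat.cast_zero, not_lt]; positivity)
  | succ n ih =>
    by_cases hat : dist a t < δ
    · exact ⟨[t], by simpa using hat, List.nodup_singleton t, by simpa using ht,
        List.mem_singleton_self t⟩
    -- step `δ / 2` towards `t`, then to a fresh point of `V` within `δ / 4`: the distance to `t`
    -- drops by at least `δ / 4`
    obtain ⟨p, hap, hpt⟩ := exists_dist_eq_dist_sub (a : E) t (by positivity : 0 ≤ δ / 2)
      (by rw [← Subtype.dist_eq]; linarith)
    obtain ⟨v, ⟨hvV, hvF⟩, hpv⟩ := (hV.sdiff_finite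
      ((insert t F).finite_toSet.image Subtype.val)).exists_dist_lt p (by positivity : 0 < δ / 4)
    set v' : V := ⟨v, hvV⟩
    have hv' : v' ∉ insert t F := fun h => hvF ⟨v', h, rfl⟩
    rw [Finset.mem_insert, not_or] at hv'
    have hav : dist a v' < δ := by
      have := dist_triangle (a : E) p v
      rw [Subtype.dist_eq]; linarith
    have hvt : dist v' t / (δ / 4) < n := by
      have := dist_triangle v p t
      rw [div_lt_iff₀ (by positivity)] at hn ⊢
      rw [Subtype.dist_eq] at hn ⊢
      push_cast at hn
      linarith [dist_comm p v]
    obtain ⟨M, hMc, hMnd, hMF, htM⟩ := ih (insert v' F) v'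
      (by rw [Finset.mem_insert, not_or]; exact ⟨Ne.symm hv'.1, ht⟩) hvt
    refine ⟨v' :: M, hMc.cons_cons hav, List.nodup_cons.2 ⟨fun h => hMF _ h
      (Finset.mem_insert_self _ _), hMnd⟩, ?_, List.mem_cons_of_mem _ htM⟩
    rintro x (_ | ⟨_, hx⟩)
    · exact hv'.2
    · exact fun hxF => hMF x hx (Finset.mem_insert_of_mem hxF)

end DenseChains

section NonCollinear

variable {E : Type*} [NormedAddCommGroup E] [NormedSpace ℝ E] [FiniteDimensional ℝ E]

theorem interior_line_eq_empty (hE : 2 ≤ Module.finrank ℝ E) (p q : E) :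
    interior (line[ℝ, p, q] : Set E) = ∅ := by
  by_contra h
  have htop := ((AffineSubspace.convex _).interior_nonempty_iff_affineSpan_eq_top).1
    (Set.nonempty_iff_ne_empty.2 h)
  rw [AffineSubspace.affineSpan_coe] at htop
  have hrank := collinear_iff_finrank_le_one.1 (collinear_pair ℝ p q)
  rw [← direction_affineSpan, htop, AffineSubspace.direction_top, finrank_top] at hrank
  omega

theorem Dense.exists_not_collinear (hE : 2 ≤ Module.finrank ℝ E) {V : Set E} (hV : Dense V)
    {δ : ℝ} (hδ : 0 < δ) :
    ∃ a ∈ V, ∃ b ∈ V, ∃ c ∈ V, dist a b < δ ∧ dist b c < δ ∧ ¬ Collinear ℝ {a, b, c} := by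
  have : Nontrivial E := Module.nontrivial_of_finrank_pos (R := ℝ) (by omega)
  obtain ⟨a, ha⟩ := hV.nonempty
  obtain ⟨b, ⟨hb, hba⟩, hab⟩ := (hV.sdiff_finite (Set.finite_singleton a)).exists_dist_lt a hδ
  have hab' : a ≠ b := Ne.symm hba
  have hopen : IsOpen (ball b δ \ line[ℝ, a, b]) :=
    isOpen_ball.sdiff (AffineSubspace.closed_of_finiteDimensional _)
  have hne : (ball b δ \ line[ℝ, a, b]).Nonempty := by
    rw [Set.sdiff_nonempty]
    intro hsub
    have := interior_mono hsub
    rw [isOpen_ball.interior_eq, interior_line_eq_empty hE a b] at this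
    exact this (mem_ball_self hδ)
  obtain ⟨c, hc, hbc, hcL⟩ := hV.exists_mem_open hopen hne
  refine ⟨a, ha, b, hb, c, hc, hab, by rwa [dist_comm, ← mem_ball], fun hcol => hcL ?_⟩
  exact hcol.mem_affineSpan_of_mem_of_ne (by simp) (by simp) (by simp) hab'

end NonCollinear

theorem exists_good_enumeration (V : Set (EuclideanSpace ℝ (Fin 2)))
    (hVc : V.Countable) (hVi : V.Infinite) (hVd : Dense V) (δ : ℝ) (hδ : 0 < δ) :
    ∃ e : ℕ+ → V, Function.Bijective e ∧
      (∀ i : ℕ+, dist ((e i : EuclideanSpace ℝ (Fin 2))) ((e (i + 1) : EuclideanSpace ℝ (Fin 2))) < δ) ∧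
      ¬ Collinear ℝ ({(e 1 : EuclideanSpace ℝ (Fin 2)), (e 2 : EuclideanSpace ℝ (Fin 2)),
        (e 3 : EuclideanSpace ℝ (Fin 2))} : Set (EuclideanSpace ℝ (Fin 2))) := by
  have : Countable V := hVc.to_subtype
  have : Infinite V := hVi.to_subtype
  obtain ⟨a, ha, b, hb, c, hc, hab, hbc, hncol⟩ := hVd.exists_not_collinear (by simp) hδ
  let l₀ : List V := [⟨a, ha⟩, ⟨b, hb⟩, ⟨c, hc⟩]
  have hl₀ : l₀.IsChain (fun u v => dist u v < δ) := by simpa [l₀] using ⟨hab, hbc⟩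
  have hnd : l₀.Nodup := by
    simp [l₀, ne₁₂_of_not_collinear hncol, ne₁₃_of_not_collinear hncol,
      ne₂₃_of_not_collinear hncol]
  obtain ⟨g, hg, hchain, hinit⟩ := exists_bijective_isChain_of_prefix
    (hVd.exists_isChain_dist_lt hδ) hl₀ hnd (List.cons_ne_nil _ _)
  refine ⟨g ∘ Equiv.pnatEquivNat, hg.comp Equiv.pnatEquivNat.bijective, fun i => ?_, ?_⟩
  · have hsucc : Equiv.pnatEquivNat (i + 1) = Equiv.pnatEquivNat i + 1 := by
      have h₁ := (i + 1).natPred_add_one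
      have h₂ := i.natPred_add_one
      rw [PNat.add_coe, PNat.one_coe] at h₁
      simp only [Equiv.pnatEquivNat_apply]
      omega
    show dist (g _) (g _) < δ
    rw [hsucc]
    exact hchain _
  · show ¬ Collinear ℝ {(g 0).1, (g 1).1, (g 2).1}
    simpa [hinit 0, hinit 1, hinit 2, l₀] using hncol
end
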